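/- For any field F and any x, y ∈ F such that x, y, xy, (1−y)/(1−xy), (1−x)/(1−xy) all lie in F \ {0,1}, the five-term element [x] + [1−xy] + [y] + [(1−y)/(1−xy)] + [(1−x)/(1−xy)] lies in the kernel of ∂ : ℤ[F \ {0,1}] → Λ²(F*) ⊗ ℚ, ∂([x]) = x ∧ (1−x). -/

import Mathlib

open scoped Classical

open scoped TensorProduct

variable (F : Type*) [Field F]

/-- The image of `x ∈ F*` in `(F*) ⊗ ℚ` (written additively), with the convention that `0 ↦ 0`. -/
noncomputable def unitsQ (x : F) : ℚ ⊗[ℤ] Additive Fˣ :=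
  if h : x = 0 then 0 else (1 : ℚ) ⊗ₜ[ℤ] Additive.ofMul (Units.mk0 x h)

/-- The wedge `a ∧ b` of two elements of `(F*) ⊗ ℚ`, realized in the degree-two part of the
exterior algebra of the `ℚ`-vector space `(F*) ⊗ ℚ`; this degree-two part is
`Λ²(F*) ⊗ ℚ`. -/
noncomputable def wedgeQ (a b : ℚ ⊗[ℤ] Additive Fˣ) :
    ExteriorAlgebra ℚ (ℚ ⊗[ℤ] Additive Fˣ) :=
  ExteriorAlgebra.ι ℚ a * ExteriorAlgebra.ι ℚ b

/-- The map `∂([x]) = x ∧ (1 - x)`, valued in `Λ²(F*) ⊗ ℚ`. -/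
noncomputable def del (x : F) : ExteriorAlgebra ℚ (ℚ ⊗[ℤ] Additive Fˣ) :=
  wedgeQ F (unitsQ F x) (unitsQ F (1 - x))

/-!
Writing `X, Y, X', Y', Z` for the images of `x, y, 1 - x, 1 - y, 1 - xy` in `(F*) ⊗ ℚ`, the five
arguments and their complements factor through these five units:
`1 - (1 - y)/(1 - xy) = y(1 - x)/(1 - xy)` and `1 - (1 - x)/(1 - xy) = x(1 - y)/(1 - xy)`.
Hence the five terms become
`X∧X' + Z∧(X+Y) + Y∧Y' + (Y'-Z)∧(Y+X'-Z) + (X'-Z)∧(X+Y'-Z)`,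
and every product in the expansion cancels against its swap.
-/

theorem unitsQ_mul {a b : F} (ha : a ≠ 0) (hb : b ≠ 0) :
    unitsQ F (a * b) = unitsQ F a + unitsQ F b := by
  simp only [unitsQ, dif_neg ha, dif_neg hb, dif_neg (mul_ne_zero ha hb), ← TensorProduct.tmul_add,
    ← ofMul_mul, Units.mk0_mul]

theorem unitsQ_div {a b : F} (ha : a ≠ 0) (hb : b ≠ 0) :
    unitsQ F (a / b) = unitsQ F a - unitsQ F b := by
  simp only [unitsQ, dif_neg ha, dif_neg hb, dif_neg (div_ne_zero ha hb), ← TensorProduct.tmul_sub,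
    ← ofMul_div]
  exact congrArg _ (congrArg _ (Units.ext (by simp)))

theorem ExteriorAlgebra.ι_mul_ι_five_term {R M : Type*} [CommRing R] [AddCommGroup M] [Module R M]
    (a b c d e : M) :
    ι R a * ι R b + ι R e * ι R (a + c) + ι R c * ι R d + ι R (d - e) * ι R (c + b - e) +
      ι R (b - e) * ι R (a + d - e) = 0 := by
  simp only [map_add, map_sub]
  set A := ι R a
  set B := ι R b
  set C := ι R c
  set D := ι R d
  set E := ι R e
  calc _ = (A * B + B * A) + (C * D + D * C) + (B * D + D * B) - (D * E + E * D)
        - (E * B + B * E) + E * E + E * E := by noncomm_ring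
    _ = 0 := by simp only [A, B, C, D, E, ι_add_mul_swap, ι_sq_zero]; simp

theorem del_five_term (x y : F)
    (hx0 : x ≠ 0) (hx1 : x ≠ 1) (hy0 : y ≠ 0) (hy1 : y ≠ 1)
    (hxy1 : x * y ≠ 1) :
    del F x + del F (1 - x * y) + del F y +
      del F ((1 - y) / (1 - x * y)) + del F ((1 - x) / (1 - x * y)) = 0 := by
  have h1x : 1 - x ≠ 0 := sub_ne_zero.mpr hx1.symm
  have h1y : 1 - y ≠ 0 := sub_ne_zero.mpr hy1.symm
  have h1xy : 1 - x * y ≠ 0 := sub_ne_zero.mpr hxy1.symm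
  have hcompl_a : 1 - (1 - y) / (1 - x * y) = y * (1 - x) / (1 - x * y) := by
    rw [eq_div_iff h1xy, sub_mul, div_mul_cancel₀ _ h1xy]; ring
  have hcompl_b : 1 - (1 - x) / (1 - x * y) = x * (1 - y) / (1 - x * y) := by
    rw [eq_div_iff h1xy, sub_mul, div_mul_cancel₀ _ h1xy]; ring
  simp only [del, wedgeQ, sub_sub_cancel, hcompl_a, hcompl_b, unitsQ_div F h1y h1xy,
    unitsQ_div F h1x h1xy, unitsQ_div F (mul_ne_zero hy0 h1x) h1xy,
    unitsQ_div F (mul_ne_zero hx0 h1y) h1xy, unitsQ_mul F hx0 hy0, unitsQ_mul F hy0 h1x,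
    unitsQ_mul F hx0 h1y]
  exact ExteriorAlgebra.ι_mul_ι_five_term _ _ _ _ _
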